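/- arXiv:2101.10007 — 2 statements merged into one kernel-verified Lean document; each statement's English description precedes it below -/
import Mathlib

section
/- (Theorem 1, Convergence.) Consider the scheduled stochastic gradient iteration with fixed λ > 0 and stepsize ε > 0: at each step k the stochastic gradient g_k, conditionally on w_k, has mean ∇J(w_k) and covariance G; the decision is α_k = 1 if J(w_k - εg_k) - J(w_k) ≤ -λ and α_k = 0 otherwise; and w_{k+1} = w_k - εg_k if α_k = 1, w_{k+1} = w_k otherwise. Suppose ρ = max over the eigenvalues λ̃ of E[xxᵀ] of (1 - ελ̃)² satisfies ρ < 1. Then for every N, E[J(w_N)] ≤ ρᴺ J(w_0) + (1 - ρᴺ) [ J(w*) + (λ + ε² Tr(Σ_x G)) / (1 - ρ) ]. -/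
/-!
Because `J` is quadratic, `J v = J w* + ½ (v - w*)ᵀ A (v - w*)` with `A = E[xxᵀ]`. Write
`d = w_k - w*`; conditionally on `w_k` the gradient is `A d` plus centred noise of covariance `G`,
so in expectation the cross terms vanish and the candidate step satisfies
`E J(w_k - ε g_k) = J w* + ½ E[(d - ε A d)ᵀ A (d - ε A d)] + ε² Tr(Σ_x G)`.
In an eigenbasis of `A` the first quadratic form is at most `ρ dᵀ A d` (the eigenvalues are
nonnegative because `(1 - ε λ)² ≤ ρ < 1`). A rejected step has `J w_k < J(w_k - ε g_k) + λ`, so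
`E J(w_{k+1}) ≤ ρ E J(w_k) + (1 - ρ) J w* + λ + ε² Tr(Σ_x G)`, and this recursion unrolls to the
claimed bound.
-/

open MeasureTheory Matrix

section Moments
variable {α ι : Type*} [MeasurableSpace α] {ν : Measure α} [Fintype ι]

lemma dotProduct_mul_eq_sum (x v : ι → ℝ) (z : ℝ) : (x ⬝ᵥ v) * z = ∑ i, v i * (x i * z) := by
  simp only [dotProduct, Finset.sum_mul]
  exact Finset.sum_congr rfl fun i _ => by ring

lemma dotProduct_mulVec_eq_sum_sum (A : Matrix ι ι ℝ) (u v : ι → ℝ) :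
    u ⬝ᵥ (A *ᵥ v) = ∑ i, ∑ j, A i j * (u i * v j) := by
  simp only [dotProduct, mulVec, Finset.mul_sum]
  exact Finset.sum_congr rfl fun i _ => Finset.sum_congr rfl fun j _ => by ring

lemma integrable_dotProduct_mul {X : α → ι → ℝ} {Z : α → ℝ}
    (h : ∀ i, Integrable (fun a => X a i * Z a) ν) (v : ι → ℝ) :
    Integrable (fun a => (X a ⬝ᵥ v) * Z a) ν := by
  simp only [dotProduct_mul_eq_sum]
  exact integrable_finsetSum _ fun i _ => (h i).const_mul (v i)

lemma integral_dotProduct_mul {X : α → ι → ℝ} {Z : α → ℝ}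
    (h : ∀ i, Integrable (fun a => X a i * Z a) ν) (v : ι → ℝ) :
    ∫ a, (X a ⬝ᵥ v) * Z a ∂ν = v ⬝ᵥ fun i => ∫ a, X a i * Z a ∂ν := by
  simp only [dotProduct_mul_eq_sum]
  rw [integral_finsetSum _ fun i _ => (h i).const_mul (v i)]
  simp only [integral_const_mul, dotProduct]

lemma integrable_mulVec_apply_mul {κ : Type*} (M : Matrix κ ι ℝ) {X : α → ι → ℝ} {Z : α → ℝ}
    (h : ∀ i, Integrable (fun a => X a i * Z a) ν) (k : κ) :
    Integrable (fun a => (M *ᵥ X a) k * Z a) ν := by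
  simpa only [mulVec, dotProduct_comm (M k)] using integrable_dotProduct_mul h (M k)

lemma integrable_dotProduct_mulVec (A : Matrix ι ι ℝ) {U V : α → ι → ℝ}
    (h : ∀ i j, Integrable (fun a => U a i * V a j) ν) :
    Integrable (fun a => U a ⬝ᵥ (A *ᵥ V a)) ν := by
  simp only [dotProduct_mulVec_eq_sum_sum]
  exact integrable_finsetSum _ fun i _ => integrable_finsetSum _ fun j _ => (h i j).const_mul _

lemma integral_dotProduct_mulVec (A : Matrix ι ι ℝ) {U V : α → ι → ℝ}
    (h : ∀ i j, Integrable (fun a => U a i * V a j) ν) :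
    ∫ a, U a ⬝ᵥ (A *ᵥ V a) ∂ν = ∑ i, ∑ j, A i j * ∫ a, U a i * V a j ∂ν := by
  simp only [dotProduct_mulVec_eq_sum_sum]
  refine (integral_finsetSum _ fun i _ =>
    integrable_finsetSum _ fun j _ => (h i j).const_mul _).trans ?_
  refine Finset.sum_congr rfl fun i _ => ?_
  rw [integral_finsetSum _ fun j _ => (h i j).const_mul _]
  simp only [integral_const_mul]

end Moments

lemma dotProduct_mulVec_sub_two_dotProduct_eq {ι : Type*} [Fintype ι] {A : Matrix ι ι ℝ}
    (hA : Aᵀ = A) {w b : ι → ℝ} (hw : A *ᵥ w = b) (v : ι → ℝ) :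
    v ⬝ᵥ (A *ᵥ v) - 2 * (v ⬝ᵥ b)
      = w ⬝ᵥ (A *ᵥ w) - 2 * (w ⬝ᵥ b) + (v - w) ⬝ᵥ (A *ᵥ (v - w)) := by
  have hcross : w ⬝ᵥ (A *ᵥ v) = v ⬝ᵥ b := by
    rw [dotProduct_mulVec, ← mulVec_transpose, hA, hw, dotProduct_comm]
  simp only [mulVec_sub, dotProduct_sub, sub_dotProduct, hcross, hw]
  ring

section LeastSquares
variable {ι : Type*} [Fintype ι] {μ : Measure ((ι → ℝ) × ℝ)}

lemma integral_sq_sub_dotProduct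
    (hxx : ∀ i j : ι, Integrable (fun p => p.1 i * p.1 j) μ)
    (hxy : ∀ i : ι, Integrable (fun p => p.1 i * p.2) μ)
    (hyy : Integrable (fun p => p.2 ^ 2) μ)
    {Exx : Matrix ι ι ℝ} (hExx : ∀ i j, Exx i j = ∫ p, p.1 i * p.1 j ∂μ)
    {Exy : ι → ℝ} (hExy : ∀ i, Exy i = ∫ p, p.1 i * p.2 ∂μ) (v : ι → ℝ) :
    ∫ p, (p.2 - p.1 ⬝ᵥ v) ^ 2 ∂μ = ∫ p, p.2 ^ 2 ∂μ - 2 * (v ⬝ᵥ Exy) + v ⬝ᵥ (Exx *ᵥ v) := by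
  have hxv : ∀ i, Integrable (fun p => p.1 i * (p.1 ⬝ᵥ v)) μ := fun i => by
    simpa only [mul_comm] using integrable_dotProduct_mul (fun j => hxx j i) v
  have hxv_eq : (fun i => ∫ p, p.1 i * (p.1 ⬝ᵥ v) ∂μ) = v ᵥ* Exx := by
    ext i
    rw [integral_congr_ae (ae_of_all _ fun p => mul_comm _ _),
      integral_dotProduct_mul (fun j => hxx j i) v]
    simp only [vecMul, dotProduct, hExx]
  have hlin := (integrable_dotProduct_mul hxy v).const_mul 2
  have hexpand : (fun p : (ι → ℝ) × ℝ => (p.2 - p.1 ⬝ᵥ v) ^ 2)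
      = fun p => (p.2 ^ 2 - 2 * ((p.1 ⬝ᵥ v) * p.2)) + (p.1 ⬝ᵥ v) * (p.1 ⬝ᵥ v) := by
    funext p; ring
  have hfirst : Integrable (fun p : (ι → ℝ) × ℝ => p.2 ^ 2 - 2 * ((p.1 ⬝ᵥ v) * p.2)) μ :=
    hyy.sub hlin
  rw [hexpand, integral_add hfirst (integrable_dotProduct_mul hxv v),
    integral_sub hyy hlin, integral_const_mul, integral_dotProduct_mul hxy,
    integral_dotProduct_mul hxv, hxv_eq, dotProduct_comm v (v ᵥ* Exx), ← dotProduct_mulVec,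
    show (fun i => ∫ p, p.1 i * p.2 ∂μ) = Exy from funext fun i => (hExy i).symm]

lemma integral_sq_sub_dotProduct_eq_add
    (hxx : ∀ i j : ι, Integrable (fun p => p.1 i * p.1 j) μ)
    (hxy : ∀ i : ι, Integrable (fun p => p.1 i * p.2) μ)
    (hyy : Integrable (fun p => p.2 ^ 2) μ)
    {Exx : Matrix ι ι ℝ} (hExx : ∀ i j, Exx i j = ∫ p, p.1 i * p.1 j ∂μ)
    {Exy : ι → ℝ} (hExy : ∀ i, Exy i = ∫ p, p.1 i * p.2 ∂μ)
    {wstar : ι → ℝ} (hws : Exx *ᵥ wstar = Exy) (v : ι → ℝ) :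
    ∫ p, (p.2 - p.1 ⬝ᵥ v) ^ 2 ∂μ
      = ∫ p, (p.2 - p.1 ⬝ᵥ wstar) ^ 2 ∂μ + (v - wstar) ⬝ᵥ (Exx *ᵥ (v - wstar)) := by
  have hsymm : Exxᵀ = Exx := by
    ext i j
    simp only [transpose_apply, hExx, mul_comm]
  rw [integral_sq_sub_dotProduct hxx hxy hyy hExx hExy,
    integral_sq_sub_dotProduct hxx hxy hyy hExx hExy]
  linarith [dotProduct_mulVec_sub_two_dotProduct_eq hsymm hws v]

end LeastSquares

namespace Matrix.IsHermitian
variable {ι : Type*} [Fintype ι] [DecidableEq ι] {A : Matrix ι ι ℝ} (hA : A.IsHermitian)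

lemma star_eigenvectorUnitary_mulVec_mulVec (v : ι → ℝ) :
    star (hA.eigenvectorUnitary : Matrix ι ι ℝ) *ᵥ (A *ᵥ v)
      = fun i => hA.eigenvalues i * (star (hA.eigenvectorUnitary : Matrix ι ι ℝ) *ᵥ v) i := by
  set U := (hA.eigenvectorUnitary : Matrix ι ι ℝ)
  have hdiag : star U * A * U = diagonal hA.eigenvalues := by
    simpa using hA.conjStarAlgAut_star_eigenvectorUnitary
  have : star U * A = diagonal hA.eigenvalues * star U := by
    rw [← hdiag, mul_assoc _ U, Unitary.mul_star_self_of_mem hA.eigenvectorUnitary.2, mul_one]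
  ext i
  rw [mulVec_mulVec, this, ← mulVec_mulVec, mulVec_diagonal]

lemma star_eigenvectorUnitary_mulVec_dotProduct (v w : ι → ℝ) :
    (star (hA.eigenvectorUnitary : Matrix ι ι ℝ) *ᵥ v) ⬝ᵥ
      (star (hA.eigenvectorUnitary : Matrix ι ι ℝ) *ᵥ w) = v ⬝ᵥ w := by
  rw [dotProduct_mulVec, ← mulVec_transpose, mulVec_mulVec, star_eq_conjTranspose,
    conjTranspose_eq_transpose_of_trivial, transpose_transpose,
    ← conjTranspose_eq_transpose_of_trivial, ← star_eq_conjTranspose,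
    Unitary.mul_star_self_of_mem hA.eigenvectorUnitary.2, one_mulVec]

lemma dotProduct_mulVec_eq_sum_eigenvalues (v : ι → ℝ) :
    v ⬝ᵥ (A *ᵥ v) = ∑ i, hA.eigenvalues i *
      (star (hA.eigenvectorUnitary : Matrix ι ι ℝ) *ᵥ v) i ^ 2 := by
  rw [← hA.star_eigenvectorUnitary_mulVec_dotProduct, star_eigenvectorUnitary_mulVec_mulVec,
    dotProduct]
  exact Finset.sum_congr rfl fun i _ => by ring

lemma dotProduct_mulVec_nonneg (hnonneg : ∀ i, 0 ≤ hA.eigenvalues i) (v : ι → ℝ) :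
    0 ≤ v ⬝ᵥ (A *ᵥ v) := by
  rw [hA.dotProduct_mulVec_eq_sum_eigenvalues]
  exact Finset.sum_nonneg fun i _ => mul_nonneg (hnonneg i) (sq_nonneg _)

lemma dotProduct_mulVec_sub_smul_mulVec_le {ε ρ : ℝ} (hnonneg : ∀ i, 0 ≤ hA.eigenvalues i)
    (hρ : ∀ i, (1 - ε * hA.eigenvalues i) ^ 2 ≤ ρ) (v : ι → ℝ) :
    (v - ε • A *ᵥ v) ⬝ᵥ (A *ᵥ (v - ε • A *ᵥ v)) ≤ ρ * (v ⬝ᵥ (A *ᵥ v)) := by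
  set c := star (hA.eigenvectorUnitary : Matrix ι ι ℝ) *ᵥ v
  have hcoord : star (hA.eigenvectorUnitary : Matrix ι ι ℝ) *ᵥ (v - ε • A *ᵥ v)
      = fun i => (1 - ε * hA.eigenvalues i) * c i := by
    ext i
    simp only [mulVec_sub, mulVec_smul, hA.star_eigenvectorUnitary_mulVec_mulVec,
      Pi.sub_apply, Pi.smul_apply, smul_eq_mul, c]
    ring
  rw [hA.dotProduct_mulVec_eq_sum_eigenvalues, hA.dotProduct_mulVec_eq_sum_eigenvalues, hcoord,
    Finset.mul_sum]
  refine Finset.sum_le_sum fun i _ => ?_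
  calc hA.eigenvalues i * ((1 - ε * hA.eigenvalues i) * c i) ^ 2
      = (1 - ε * hA.eigenvalues i) ^ 2 * (hA.eigenvalues i * c i ^ 2) := by ring
    _ ≤ ρ * (hA.eigenvalues i * c i ^ 2) :=
      mul_le_mul_of_nonneg_right (hρ i) (mul_nonneg (hnonneg i) (sq_nonneg _))

end Matrix.IsHermitian

section CondExp
variable {Ω : Type*} {m m₀ : MeasurableSpace Ω} {P : Measure Ω} {f g c : Ω → ℝ}

lemma condExp_mul_ae_eq_of_condExp_ae_eq (hf : StronglyMeasurable[m] f)
    (hfg : Integrable (fun ω => f ω * g ω) P) (hg : Integrable g P) (hc : P[g|m] =ᵐ[P] c) :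
    P[fun ω => f ω * g ω|m] =ᵐ[P] fun ω => f ω * c ω :=
  (condExp_mul_of_stronglyMeasurable_left hf hfg hg).trans (hc.mono fun ω hω => by simp [hω])

lemma integrable_mul_of_condExp_ae_eq (hf : StronglyMeasurable[m] f)
    (hfg : Integrable (fun ω => f ω * g ω) P) (hg : Integrable g P) (hc : P[g|m] =ᵐ[P] c) :
    Integrable (fun ω => f ω * c ω) P :=
  integrable_condExp.congr (condExp_mul_ae_eq_of_condExp_ae_eq hf hfg hg hc)

lemma integrable_mul_sub_of_condExp_ae_eq (hf : StronglyMeasurable[m] f)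
    (hfg : Integrable (fun ω => f ω * g ω) P) (hg : Integrable g P) (hc : P[g|m] =ᵐ[P] c) :
    Integrable (fun ω => f ω * (g ω - c ω)) P :=
  (hfg.sub (integrable_mul_of_condExp_ae_eq hf hfg hg hc)).congr
    (ae_of_all _ fun _ => (mul_sub _ _ _).symm)

variable [IsFiniteMeasure P]

lemma integral_mul_sub_eq_zero_of_condExp_ae_eq (hm : m ≤ m₀) (hf : StronglyMeasurable[m] f)
    (hfg : Integrable (fun ω => f ω * g ω) P) (hg : Integrable g P) (hc : P[g|m] =ᵐ[P] c) :
    ∫ ω, f ω * (g ω - c ω) ∂P = 0 := by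
  simp only [mul_sub]
  rw [integral_sub hfg (integrable_mul_of_condExp_ae_eq hf hfg hg hc), ← integral_condExp hm,
    integral_congr_ae (condExp_mul_ae_eq_of_condExp_ae_eq hf hfg hg hc), sub_self]

end CondExp

lemma trace_transpose_mul_eq_sum_sum {ι : Type*} [Fintype ι] (A G : Matrix ι ι ℝ) :
    (Aᵀ * G).trace = ∑ i, ∑ j, A i j * G i j := by
  simp only [trace, diag, mul_apply, transpose_apply]
  exact Finset.sum_comm

section NoisyStep
variable {Ω ι : Type*} [Fintype ι] {m m₀ : MeasurableSpace Ω} {P : Measure Ω}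
  [IsProbabilityMeasure P]

theorem integral_dotProduct_mulVec_sub_smul_noise (hm : m ≤ m₀) (A G : Matrix ι ι ℝ) (ε : ℝ)
    {u g c : Ω → ι → ℝ}
    (hu : ∀ i, StronglyMeasurable[m] fun ω => u ω i)
    (hc : ∀ i, StronglyMeasurable[m] fun ω => c ω i)
    (hg : ∀ j, Integrable (fun ω => g ω j) P)
    (hug : ∀ i j, Integrable (fun ω => u ω i * g ω j) P)
    (hcg : ∀ i j, Integrable (fun ω => c ω i * g ω j) P)
    (hgg : ∀ i j, Integrable (fun ω => g ω i * g ω j) P)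
    (hQu : Integrable (fun ω => u ω ⬝ᵥ (A *ᵥ u ω)) P)
    (hmean : ∀ j, P[fun ω => g ω j|m] =ᵐ[P] fun ω => c ω j)
    (hcov : ∀ i j, P[fun ω => (g ω i - c ω i) * (g ω j - c ω j)|m] =ᵐ[P] fun _ => G i j) :
    ∫ ω, (u ω - ε • (g ω - c ω)) ⬝ᵥ (A *ᵥ (u ω - ε • (g ω - c ω))) ∂P
      = ∫ ω, u ω ⬝ᵥ (A *ᵥ u ω) ∂P + ε ^ 2 * (Aᵀ * G).trace := by
  set ξ := fun ω => g ω - c ω with hξ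
  have huξ : ∀ i j, Integrable (fun ω => u ω i * ξ ω j) P := fun i j =>
    integrable_mul_sub_of_condExp_ae_eq (hu i) (hug i j) (hg j) (hmean j)
  have hξξ : ∀ i j, Integrable (fun ω => ξ ω i * ξ ω j) P := fun i j => by
    have hcξ := integrable_mul_sub_of_condExp_ae_eq (hc i) (hcg i j) (hg j) (hmean j)
    have hexpand : (fun ω => ξ ω i * ξ ω j)
        = fun ω => (g ω i * g ω j - c ω j * g ω i) - c ω i * (g ω j - c ω j) := by
      funext ω; simp only [hξ, Pi.sub_apply]; ring
    rw [hexpand]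
    exact ((hgg i j).sub (hcg j i)).sub hcξ
  have hcross : ∫ ω, u ω ⬝ᵥ ((A + Aᵀ) *ᵥ ξ ω) ∂P = 0 := by
    rw [integral_dotProduct_mulVec _ huξ]
    simp only [hξ, Pi.sub_apply, integral_mul_sub_eq_zero_of_condExp_ae_eq hm (hu _) (hug _ _)
      (hg _) (hmean _), mul_zero, Finset.sum_const_zero]
  have hnoise : ∫ ω, ξ ω ⬝ᵥ (A *ᵥ ξ ω) ∂P = (Aᵀ * G).trace := by
    rw [integral_dotProduct_mulVec _ hξξ, trace_transpose_mul_eq_sum_sum]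
    refine Finset.sum_congr rfl fun i _ => Finset.sum_congr rfl fun j _ => congrArg _ ?_
    exact (integral_condExp hm).symm.trans ((integral_congr_ae (hcov i j)).trans (by simp))
  have hexpand : ∀ ω, (u ω - ε • ξ ω) ⬝ᵥ (A *ᵥ (u ω - ε • ξ ω))
      = u ω ⬝ᵥ (A *ᵥ u ω) - ε * u ω ⬝ᵥ ((A + Aᵀ) *ᵥ ξ ω) + ε ^ 2 * ξ ω ⬝ᵥ (A *ᵥ ξ ω) := by
    intro ω
    have hswap : ξ ω ⬝ᵥ (A *ᵥ u ω) = u ω ⬝ᵥ (Aᵀ *ᵥ ξ ω) := by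
      rw [mulVec_transpose, dotProduct_comm (u ω), ← dotProduct_mulVec]
    simp only [mulVec_sub, mulVec_smul, dotProduct_sub, sub_dotProduct, dotProduct_smul,
      smul_dotProduct, add_mulVec, dotProduct_add, hswap, smul_eq_mul]
    ring
  have hcross_int := integrable_dotProduct_mulVec (A + Aᵀ) huξ
  have hnoise_int := integrable_dotProduct_mulVec A hξξ
  have hdiff_int : Integrable (fun ω => u ω ⬝ᵥ (A *ᵥ u ω) - ε * u ω ⬝ᵥ ((A + Aᵀ) *ᵥ ξ ω)) P :=
    hQu.sub (hcross_int.const_mul ε)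
  calc ∫ ω, (u ω - ε • (g ω - c ω)) ⬝ᵥ (A *ᵥ (u ω - ε • (g ω - c ω))) ∂P
      = ∫ ω, (u ω ⬝ᵥ (A *ᵥ u ω) - ε * u ω ⬝ᵥ ((A + Aᵀ) *ᵥ ξ ω)
          + ε ^ 2 * ξ ω ⬝ᵥ (A *ᵥ ξ ω)) ∂P := integral_congr_ae (ae_of_all _ hexpand)
    _ = _ := by
      rw [integral_add hdiff_int (hnoise_int.const_mul _),
        integral_sub hQu (hcross_int.const_mul ε), integral_const_mul, integral_const_mul,
        hcross, hnoise, mul_zero, sub_zero]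

end NoisyStep

section OneStep
variable {ι Ω : Type*} [Fintype ι] [DecidableEq ι] [MeasurableSpace Ω] {P : Measure Ω}
  [IsProbabilityMeasure P] {A : Matrix ι ι ℝ} {ε ρ : ℝ} {wstar b : ι → ℝ} {W g : Ω → ι → ℝ}

theorem integral_dotProduct_mulVec_sub_smul_le (hA : A.IsHermitian)
    (hnonneg : ∀ i, 0 ≤ hA.eigenvalues i) (hρ : ∀ i, (1 - ε * hA.eigenvalues i) ^ 2 ≤ ρ)
    (hAw : A *ᵥ wstar = b) (G : Matrix ι ι ℝ) (hW : Measurable W)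
    (hg : ∀ i, Integrable (fun ω => g ω i) P)
    (hgg : ∀ i j, Integrable (fun ω => g ω i * g ω j) P)
    (hWg : ∀ i j, Integrable (fun ω => W ω i * g ω j) P)
    (hQW : Integrable (fun ω => (W ω - wstar) ⬝ᵥ (A *ᵥ (W ω - wstar))) P)
    (hmean : ∀ i, P[(fun ω => g ω i) | MeasurableSpace.comap W inferInstance]
      =ᵐ[P] fun ω => (A *ᵥ W ω - b) i)
    (hcov : ∀ i j,
      P[(fun ω => (g ω i - (A *ᵥ W ω - b) i) * (g ω j - (A *ᵥ W ω - b) j)) |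
          MeasurableSpace.comap W inferInstance]
        =ᵐ[P] fun _ => G i j) :
    ∫ ω, (W ω - ε • g ω - wstar) ⬝ᵥ (A *ᵥ (W ω - ε • g ω - wstar)) ∂P
      ≤ ρ * ∫ ω, (W ω - wstar) ⬝ᵥ (A *ᵥ (W ω - wstar)) ∂P + ε ^ 2 * (Aᵀ * G).trace := by
  have hWm : ∀ F : (ι → ℝ) → ℝ, Continuous F →
      StronglyMeasurable[MeasurableSpace.comap W inferInstance] fun ω => F (W ω) :=
    fun F hF => (hF.measurable.comp (comap_measurable W)).stronglyMeasurable
  set D := fun ω => W ω - wstar with hD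
  set u := fun ω => D ω - ε • A *ᵥ D ω with hu
  have hc : ∀ ω i, (A *ᵥ W ω - b) i = (A *ᵥ D ω) i := fun ω i => by
    simp only [D, mulVec_sub, hAw]
  simp only [hc] at hmean hcov
  have hDg : ∀ i j, Integrable (fun ω => D ω i * g ω j) P := fun i j =>
    ((hWg i j).sub ((hg j).const_mul (wstar i))).congr (ae_of_all _ fun _ => (sub_mul _ _ _).symm)
  have hcg : ∀ i j, Integrable (fun ω => (A *ᵥ D ω) i * g ω j) P := fun i j =>
    integrable_mulVec_apply_mul A (fun l => hDg l j) i
  have hug : ∀ i j, Integrable (fun ω => u ω i * g ω j) P := fun i j => by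
    refine ((hDg i j).sub ((hcg i j).const_mul ε)).congr (ae_of_all _ fun ω => ?_)
    simp only [u, Pi.sub_apply, Pi.smul_apply, smul_eq_mul]
    ring
  have hcontract : ∀ ω, u ω ⬝ᵥ (A *ᵥ u ω) ≤ ρ * (D ω ⬝ᵥ (A *ᵥ D ω)) :=
    fun ω => hA.dotProduct_mulVec_sub_smul_mulVec_le hnonneg hρ (D ω)
  have hQu : Integrable (fun ω => u ω ⬝ᵥ (A *ᵥ u ω)) P := by
    refine Integrable.mono' (hQW.const_mul ρ) ?_ (ae_of_all _ fun ω => ?_)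
    · simp only [hu, hD]
      exact Measurable.aestronglyMeasurable (by fun_prop)
    · rw [Real.norm_eq_abs, abs_of_nonneg (hA.dotProduct_mulVec_nonneg hnonneg _)]
      exact hcontract ω
  have hnoisy := integral_dotProduct_mulVec_sub_smul_noise hW.comap_le A G ε
    (u := u) (c := fun ω => A *ᵥ D ω)
    (fun i => hWm (fun v => (v - wstar - ε • A *ᵥ (v - wstar)) i) (by fun_prop))
    (fun i => hWm (fun v => (A *ᵥ (v - wstar)) i) (by fun_prop)) hg hug hcg hgg hQu hmean hcov
  have hsplit : ∀ ω, u ω - ε • (g ω - A *ᵥ D ω) = W ω - ε • g ω - wstar := fun ω => by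
    simp only [u, D, smul_sub]; abel
  simp only [hsplit] at hnoisy
  have hmono := integral_mono hQu (hQW.const_mul ρ) hcontract
  rw [integral_const_mul] at hmono
  linarith

theorem integral_comp_sub_smul_le (hA : A.IsHermitian)
    (hnonneg : ∀ i, 0 ≤ hA.eigenvalues i) (hρ : ∀ i, (1 - ε * hA.eigenvalues i) ^ 2 ≤ ρ)
    {J : (ι → ℝ) → ℝ} (hJ : ∀ v, J v = J wstar + 1 / 2 * ((v - wstar) ⬝ᵥ (A *ᵥ (v - wstar))))
    (hAw : A *ᵥ wstar = b) (G : Matrix ι ι ℝ) (hW : Measurable W)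
    (hg : ∀ i, Integrable (fun ω => g ω i) P)
    (hgg : ∀ i j, Integrable (fun ω => g ω i * g ω j) P)
    (hWg : ∀ i j, Integrable (fun ω => W ω i * g ω j) P)
    (hJW : Integrable (fun ω => J (W ω)) P)
    (hJWg : Integrable (fun ω => J (W ω - ε • g ω)) P)
    (hmean : ∀ i, P[(fun ω => g ω i) | MeasurableSpace.comap W inferInstance]
      =ᵐ[P] fun ω => (A *ᵥ W ω - b) i)
    (hcov : ∀ i j,
      P[(fun ω => (g ω i - (A *ᵥ W ω - b) i) * (g ω j - (A *ᵥ W ω - b) j)) |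
          MeasurableSpace.comap W inferInstance]
        =ᵐ[P] fun _ => G i j) :
    ∫ ω, J (W ω - ε • g ω) ∂P
      ≤ ρ * ∫ ω, J (W ω) ∂P + (1 - ρ) * J wstar + ε ^ 2 / 2 * (Aᵀ * G).trace := by
  have hQ : ∀ {V : Ω → ι → ℝ}, Integrable (fun ω => J (V ω)) P →
      Integrable (fun ω => (V ω - wstar) ⬝ᵥ (A *ᵥ (V ω - wstar))) P ∧
      ∫ ω, (V ω - wstar) ⬝ᵥ (A *ᵥ (V ω - wstar)) ∂P = 2 * ∫ ω, J (V ω) ∂P - 2 * J wstar := by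
    intro V hV
    have hQV : (fun ω => (V ω - wstar) ⬝ᵥ (A *ᵥ (V ω - wstar)))
        = fun ω => 2 * J (V ω) - 2 * J wstar := by
      funext ω; rw [hJ (V ω)]; ring
    rw [hQV]
    refine ⟨(hV.const_mul 2).sub (integrable_const _), ?_⟩
    rw [integral_sub (hV.const_mul 2) (integrable_const _), integral_const_mul]
    simp
  obtain ⟨hQW, hQW_eq⟩ := hQ hJW
  have hdescent := integral_dotProduct_mulVec_sub_smul_le hA hnonneg hρ hAw G hW hg hgg hWg hQW
    hmean hcov
  rw [hQW_eq, (hQ hJWg).2] at hdescent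
  linarith

end OneStep

lemma le_pow_mul_add_one_sub_pow_mul {a : ℕ → ℝ} {ρ B : ℝ} (hρ : 0 ≤ ρ)
    (h : ∀ k, a (k + 1) ≤ ρ * a k + (1 - ρ) * B) (N : ℕ) :
    a N ≤ ρ ^ N * a 0 + (1 - ρ ^ N) * B := by
  induction N with
  | zero => simp
  | succ k ih =>
    calc a (k + 1) ≤ ρ * a k + (1 - ρ) * B := h k
      _ ≤ ρ * (ρ ^ k * a 0 + (1 - ρ ^ k) * B) + (1 - ρ) * B := by gcongr
      _ = ρ ^ (k + 1) * a 0 + (1 - ρ ^ (k + 1)) * B := by ring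

lemma apply_ite_le_add {X : Type*} (f : X → ℝ) {x y : X} {lam : ℝ} (hlam : 0 ≤ lam) :
    f (if f y - f x ≤ -lam then y else x) ≤ f y + lam := by
  split_ifs with h <;> linarith

theorem stmt9_general {n : ℕ} [NeZero n] (μ : Measure ((Fin n → ℝ) × ℝ))
    (hxx : ∀ i j : Fin n, Integrable (fun p => p.1 i * p.1 j) μ)
    (hxy : ∀ i : Fin n, Integrable (fun p => p.1 i * p.2) μ)
    (hyy : Integrable (fun p => p.2 ^ 2) μ)
    (J : (Fin n → ℝ) → ℝ)
    (hJ : ∀ w : Fin n → ℝ, J w = (1 / 2) * ∫ p, (p.2 - p.1 ⬝ᵥ w) ^ 2 ∂μ)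
    (Exx : Matrix (Fin n) (Fin n) ℝ)
    (hExx : ∀ i j, Exx i j = ∫ p, p.1 i * p.1 j ∂μ)
    (Exy : Fin n → ℝ)
    (hExy : ∀ i, Exy i = ∫ p, p.1 i * p.2 ∂μ)
    (Sx : Matrix (Fin n) (Fin n) ℝ) (hSx : Sx = (1 / 2 : ℝ) • Exx)
    (wstar : Fin n → ℝ) (hws : Exx *ᵥ wstar = Exy)
    {Ω : Type*} [MeasurableSpace Ω] (P : Measure Ω) [IsProbabilityMeasure P]
    (lam ε : ℝ) (hlam : 0 < lam) (hε : 0 < ε)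
    (w g : ℕ → Ω → Fin n → ℝ)
    (hwmeas : ∀ k, Measurable (w k))
    (w0 : Fin n → ℝ) (hw0 : ∀ ω, w 0 ω = w0)
    (G : Matrix (Fin n) (Fin n) ℝ)
    (hgi : ∀ k i, Integrable (fun ω => g k ω i) P)
    (hgij : ∀ k i j, Integrable (fun ω => g k ω i * g k ω j) P)
    (hwgi : ∀ k i j, Integrable (fun ω => w k ω i * g k ω j) P)
    (hJw : ∀ k, Integrable (fun ω => J (w k ω)) P)
    (hJwg : ∀ k, Integrable (fun ω => J (w k ω - ε • g k ω)) P)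
    (hmean : ∀ k i, P[(fun ω => g k ω i) | MeasurableSpace.comap (w k) inferInstance]
      =ᵐ[P] fun ω => (Exx *ᵥ w k ω - Exy) i)
    (hcov : ∀ k i j,
      P[(fun ω => (g k ω i - (Exx *ᵥ w k ω - Exy) i) * (g k ω j - (Exx *ᵥ w k ω - Exy) j)) |
          MeasurableSpace.comap (w k) inferInstance]
        =ᵐ[P] fun _ => G i j)
    (hstep : ∀ k ω, w (k + 1) ω =
      if J (w k ω - ε • g k ω) - J (w k ω) ≤ -lam then w k ω - ε • g k ω else w k ω)
    (hherm : Exx.IsHermitian)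
    (ρ : ℝ)
    (hρ : ρ = Finset.univ.sup' Finset.univ_nonempty
      fun i => (1 - ε * hherm.eigenvalues i) ^ 2)
    (hρ1 : ρ < 1) :
    ∀ N, ∫ ω, J (w N ω) ∂P
      ≤ ρ ^ N * J w0
        + (1 - ρ ^ N) * (J wstar + (lam + ε ^ 2 * (Sx * G).trace) / (1 - ρ)) := by
  have hquad : ∀ v, J v = J wstar + 1 / 2 * ((v - wstar) ⬝ᵥ (Exx *ᵥ (v - wstar))) := fun v => by
    rw [hJ, hJ, integral_sq_sub_dotProduct_eq_add hxx hxy hyy hExx hExy hws v]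
    ring
  have hbound : ∀ i, (1 - ε * hherm.eigenvalues i) ^ 2 ≤ ρ := fun i =>
    hρ ▸ Finset.le_sup' (fun i => (1 - ε * hherm.eigenvalues i) ^ 2) (Finset.mem_univ i)
  have hρ0 : 0 ≤ ρ := (sq_nonneg _).trans (hbound 0)
  have hnonneg : ∀ i, 0 ≤ hherm.eigenvalues i := fun i => by
    by_contra! hneg
    nlinarith [hbound i, mul_neg_of_pos_of_neg hε hneg]
  have htrace : ε ^ 2 / 2 * (Exxᵀ * G).trace = ε ^ 2 * (Sx * G).trace := by
    rw [← conjTranspose_eq_transpose_of_trivial, hherm, hSx, smul_mul, trace_smul, smul_eq_mul]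
    ring
  have hrec : ∀ k, ∫ ω, J (w (k + 1) ω) ∂P ≤ ρ * ∫ ω, J (w k ω) ∂P
      + (1 - ρ) * (J wstar + (lam + ε ^ 2 * (Sx * G).trace) / (1 - ρ)) := fun k => by
    have hacc : ∫ ω, J (w (k + 1) ω) ∂P ≤ ∫ ω, J (w k ω - ε • g k ω) ∂P + lam := by
      calc ∫ ω, J (w (k + 1) ω) ∂P ≤ ∫ ω, (J (w k ω - ε • g k ω) + lam) ∂P :=
            integral_mono (hJw _) ((hJwg k).add (integrable_const _))
              fun ω => hstep k ω ▸ apply_ite_le_add J hlam.le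
        _ = ∫ ω, J (w k ω - ε • g k ω) ∂P + lam := by
            rw [integral_add (hJwg k) (integrable_const _)]
            simp
    have hdescent := integral_comp_sub_smul_le hherm hnonneg hbound hquad hws G (hwmeas k)
      (hgi k) (hgij k) (hwgi k) (hJw k) (hJwg k) (hmean k) (hcov k)
    rw [htrace] at hdescent
    rw [mul_add, mul_div_cancel₀ _ (sub_ne_zero.mpr hρ1.ne')]
    linarith
  intro N
  simpa [hw0] using le_pow_mul_add_one_sub_pow_mul (a := fun k => ∫ ω, J (w k ω) ∂P) hρ0 hrec N

theorem stmt9 {n : ℕ} [NeZero n] (μ : Measure ((Fin n → ℝ) × ℝ)) [IsProbabilityMeasure μ]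
    (hxx : ∀ i j : Fin n, Integrable (fun p => p.1 i * p.1 j) μ)
    (hxy : ∀ i : Fin n, Integrable (fun p => p.1 i * p.2) μ)
    (hyy : Integrable (fun p => p.2 ^ 2) μ)
    (J : (Fin n → ℝ) → ℝ)
    (hJ : ∀ w : Fin n → ℝ, J w = (1 / 2) * ∫ p, (p.2 - p.1 ⬝ᵥ w) ^ 2 ∂μ)
    (Exx : Matrix (Fin n) (Fin n) ℝ)
    (hExx : ∀ i j, Exx i j = ∫ p, p.1 i * p.1 j ∂μ)
    (Exy : Fin n → ℝ)
    (hExy : ∀ i, Exy i = ∫ p, p.1 i * p.2 ∂μ)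
    (Sx : Matrix (Fin n) (Fin n) ℝ) (hSx : Sx = (1 / 2 : ℝ) • Exx)
    (wstar : Fin n → ℝ) (hws : Exx *ᵥ wstar = Exy)
    {Ω : Type*} [MeasurableSpace Ω] (P : Measure Ω) [IsProbabilityMeasure P]
    (lam ε : ℝ) (hlam : 0 < lam) (hε : 0 < ε)
    (w g : ℕ → Ω → Fin n → ℝ)
    (hwmeas : ∀ k, Measurable (w k))
    (w0 : Fin n → ℝ) (hw0 : ∀ ω, w 0 ω = w0)
    (G : Matrix (Fin n) (Fin n) ℝ)
    (hgi : ∀ k i, Integrable (fun ω => g k ω i) P)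
    (hgij : ∀ k i j, Integrable (fun ω => g k ω i * g k ω j) P)
    (hwgi : ∀ k i j, Integrable (fun ω => w k ω i * g k ω j) P)
    (hJw : ∀ k, Integrable (fun ω => J (w k ω)) P)
    (hJwg : ∀ k, Integrable (fun ω => J (w k ω - ε • g k ω)) P)
    (hmean : ∀ k i, P[(fun ω => g k ω i) | MeasurableSpace.comap (w k) inferInstance]
      =ᵐ[P] fun ω => (Exx *ᵥ w k ω - Exy) i)
    (hcov : ∀ k i j,
      P[(fun ω => (g k ω i - (Exx *ᵥ w k ω - Exy) i) * (g k ω j - (Exx *ᵥ w k ω - Exy) j)) |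
          MeasurableSpace.comap (w k) inferInstance]
        =ᵐ[P] fun _ => G i j)
    (hstep : ∀ k ω, w (k + 1) ω =
      if J (w k ω - ε • g k ω) - J (w k ω) ≤ -lam then w k ω - ε • g k ω else w k ω)
    (hherm : Exx.IsHermitian)
    (ρ : ℝ)
    (hρ : ρ = Finset.univ.sup' Finset.univ_nonempty
      fun i => (1 - ε * hherm.eigenvalues i) ^ 2)
    (hρ1 : ρ < 1) :
    ∀ N, ∫ ω, J (w N ω) ∂P
      ≤ ρ ^ N * J w0
        + (1 - ρ ^ N) * (J wstar + (lam + ε ^ 2 * (Sx * G).trace) / (1 - ρ)) :=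
  stmt9_general μ hxx hxy hyy J hJ Exx hExx Exy hExy Sx hSx wstar hws P lam ε hlam hε w g hwmeas w0
    hw0 G hgi hgij hwgi hJw hJwg hmean hcov hstep hherm ρ hρ hρ1
end

section
/- (Theorem 2, Communication guarantee.) Consider any sequence of random iterates w_k and random directions g_k on a probability space with J(w_k) integrable, scheduled by the rule α_k = 1 if J(w_k - εg_k) - J(w_k) ≤ -λ and α_k = 0 otherwise, with w_{k+1} = w_k - εg_k if α_k = 1 and w_{k+1} = w_k otherwise, where λ > 0, ε > 0 and w_0 is deterministic. Then the total expected communication rate satisfies limsup_{N→∞} Σ_{k=0}^{N} E[α_k] ≤ (J(w_0) - J(w*)) / λ. -/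
/-!
Each transmission lowers the loss by at least `λ`, while iterates that are not transmitted leave
it unchanged, so `λ · #{k ≤ N : α_k = 1} ≤ J(w₀) - J(w_{N+1}) ≤ J(w₀) - J(w*)` pathwise, the last
step because the normal equations make `w*` a global minimiser of `J`. Taking expectations bounds
every partial sum, hence the limsup.
-/

open MeasureTheory Matrix

section LeastSquares

variable {ι : Type*} [Fintype ι] (μ : Measure ((ι → ℝ) × ℝ))

noncomputable def secondMoment : Matrix ι ι ℝ := Matrix.of fun i j => ∫ p, p.1 i * p.1 j ∂μ

noncomputable def crossMoment : ι → ℝ := fun i => ∫ p, p.1 i * p.2 ∂μ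

variable {μ}

theorem integrable_dotProduct_mul_dotProduct
    (hxx : ∀ i j, Integrable (fun p => p.1 i * p.1 j) μ) (u v : ι → ℝ) :
    Integrable (fun p : (ι → ℝ) × ℝ => (p.1 ⬝ᵥ u) * (p.1 ⬝ᵥ v)) μ := by
  simp only [dotProduct, Finset.sum_mul_sum]
  refine integrable_finsetSum _ fun i _ => integrable_finsetSum _ fun j _ => ?_
  exact ((hxx i j).const_mul (u i * v j)).congr (ae_of_all _ fun p => by ring)

theorem integral_dotProduct_mul_dotProduct
    (hxx : ∀ i j, Integrable (fun p => p.1 i * p.1 j) μ) (u v : ι → ℝ) :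
    ∫ p, (p.1 ⬝ᵥ u) * (p.1 ⬝ᵥ v) ∂μ = u ⬝ᵥ (secondMoment μ *ᵥ v) := by
  have hterm : ∀ i j, (fun p : (ι → ℝ) × ℝ => p.1 i * u i * (p.1 j * v j))
      = fun p => u i * v j * (p.1 i * p.1 j) := fun i j => funext fun p => by ring
  simp only [dotProduct, Finset.sum_mul_sum]
  rw [integral_finsetSum _ fun i _ => integrable_finsetSum _ fun j _ => by
    rw [hterm]; exact (hxx i j).const_mul _]
  refine Finset.sum_congr rfl fun i _ => ?_
  rw [integral_finsetSum _ fun j _ => by rw [hterm]; exact (hxx i j).const_mul _,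
    mulVec, dotProduct, Finset.mul_sum]
  refine Finset.sum_congr rfl fun j _ => ?_
  rw [hterm, integral_const_mul, secondMoment, of_apply]
  ring

theorem integrable_dotProduct_mul_snd (hxy : ∀ i, Integrable (fun p => p.1 i * p.2) μ)
    (u : ι → ℝ) : Integrable (fun p : (ι → ℝ) × ℝ => (p.1 ⬝ᵥ u) * p.2) μ := by
  simp only [dotProduct, Finset.sum_mul]
  refine integrable_finsetSum _ fun i _ => ?_
  simpa only [mul_right_comm] using (hxy i).mul_const (u i)

theorem integral_dotProduct_mul_snd (hxy : ∀ i, Integrable (fun p => p.1 i * p.2) μ)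
    (u : ι → ℝ) : ∫ p, (p.1 ⬝ᵥ u) * p.2 ∂μ = u ⬝ᵥ crossMoment μ := by
  have hterm : ∀ i, (fun p : (ι → ℝ) × ℝ => p.1 i * u i * p.2)
      = fun p => u i * (p.1 i * p.2) := fun i => funext fun p => by ring
  simp only [dotProduct, Finset.sum_mul]
  rw [integral_finsetSum _ fun i _ => by rw [hterm]; exact (hxy i).const_mul _]
  exact Finset.sum_congr rfl fun i _ => by rw [hterm, integral_const_mul, crossMoment]

theorem integrable_sq_sub_dotProduct
    (hxx : ∀ i j, Integrable (fun p => p.1 i * p.1 j) μ)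
    (hxy : ∀ i, Integrable (fun p => p.1 i * p.2) μ) (hyy : Integrable (fun p => p.2 ^ 2) μ)
    (w : ι → ℝ) : Integrable (fun p : (ι → ℝ) × ℝ => (p.2 - p.1 ⬝ᵥ w) ^ 2) μ := by
  have hexp : (fun p : (ι → ℝ) × ℝ => (p.2 - p.1 ⬝ᵥ w) ^ 2)
      = fun p => p.2 ^ 2 - 2 * ((p.1 ⬝ᵥ w) * p.2) + (p.1 ⬝ᵥ w) * (p.1 ⬝ᵥ w) :=
    funext fun p => by ring
  rw [hexp]
  exact (hyy.sub ((integrable_dotProduct_mul_snd hxy w).const_mul 2)).add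
    (integrable_dotProduct_mul_dotProduct hxx w w)

theorem integral_sq_sub_dotProduct_le_of_normal_eq
    (hxx : ∀ i j, Integrable (fun p => p.1 i * p.1 j) μ)
    (hxy : ∀ i, Integrable (fun p => p.1 i * p.2) μ) (hyy : Integrable (fun p => p.2 ^ 2) μ)
    {wstar : ι → ℝ} (hws : secondMoment μ *ᵥ wstar = crossMoment μ) (w : ι → ℝ) :
    ∫ p, (p.2 - p.1 ⬝ᵥ wstar) ^ 2 ∂μ ≤ ∫ p, (p.2 - p.1 ⬝ᵥ w) ^ 2 ∂μ := by
  set d := w - wstar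
  have hexp : (fun p : (ι → ℝ) × ℝ => (p.2 - p.1 ⬝ᵥ w) ^ 2)
      = fun p => ((p.2 - p.1 ⬝ᵥ wstar) ^ 2 + (p.1 ⬝ᵥ d) * (p.1 ⬝ᵥ d))
          - 2 * ((p.1 ⬝ᵥ d) * p.2 - (p.1 ⬝ᵥ d) * (p.1 ⬝ᵥ wstar)) := by
    funext p
    simp only [d, dotProduct_sub]
    ring
  have hres := integrable_sq_sub_dotProduct hxx hxy hyy wstar
  have hdd := integrable_dotProduct_mul_dotProduct hxx d d
  have hdy := integrable_dotProduct_mul_snd hxy d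
  have hdw := integrable_dotProduct_mul_dotProduct hxx d wstar
  have hsum : Integrable (fun p : (ι → ℝ) × ℝ =>
      (p.2 - p.1 ⬝ᵥ wstar) ^ 2 + (p.1 ⬝ᵥ d) * (p.1 ⬝ᵥ d)) μ := hres.add hdd
  have hcross : Integrable (fun p : (ι → ℝ) × ℝ =>
      (p.1 ⬝ᵥ d) * p.2 - (p.1 ⬝ᵥ d) * (p.1 ⬝ᵥ wstar)) μ := hdy.sub hdw
  -- The normal equations say exactly that the residual is orthogonal to every `x ⬝ᵥ d`.
  have horth : ∫ p, ((p.1 ⬝ᵥ d) * p.2 - (p.1 ⬝ᵥ d) * (p.1 ⬝ᵥ wstar)) ∂μ = 0 := by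
    rw [integral_sub hdy hdw, integral_dotProduct_mul_snd hxy,
      integral_dotProduct_mul_dotProduct hxx, hws, sub_self]
  rw [hexp, integral_sub hsum (hcross.const_mul 2), integral_const_mul, horth,
    integral_add hres hdd]
  have hnonneg : 0 ≤ ∫ p, (p.1 ⬝ᵥ d) * (p.1 ⬝ᵥ d) ∂μ :=
    integral_nonneg fun p => mul_self_nonneg _
  linarith

end LeastSquares

theorem mul_ite_le_sub_ite {E : Type*} (f : E → ℝ) (lam : ℝ) (v v' : E) :
    lam * (if f v' - f v ≤ -lam then 1 else 0)
      ≤ f v - f (if f v' - f v ≤ -lam then v' else v) := by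
  split_ifs with h <;> linarith

theorem mul_sum_range_le_of_le_sub {a F : ℕ → ℝ} {lam : ℝ}
    (h : ∀ k, lam * a k ≤ F k - F (k + 1)) (N : ℕ) :
    lam * ∑ k ∈ Finset.range N, a k ≤ F 0 - F N :=
  calc lam * ∑ k ∈ Finset.range N, a k
      = ∑ k ∈ Finset.range N, lam * a k := Finset.mul_sum _ _ _
    _ ≤ ∑ k ∈ Finset.range N, (F k - F (k + 1)) := Finset.sum_le_sum fun k _ => h k
    _ = F 0 - F N := Finset.sum_range_sub' F N

theorem sum_integral_le_of_mul_le_sub {Ω : Type*} [MeasurableSpace Ω] {P : Measure Ω}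
    [IsProbabilityMeasure P] {α F : ℕ → Ω → ℝ} {lam c m : ℝ} (hlam : 0 < lam)
    (hαint : ∀ k, Integrable (α k) P) (hdesc : ∀ k ω, lam * α k ω ≤ F k ω - F (k + 1) ω)
    (hF0 : ∀ ω, F 0 ω = c) (hFm : ∀ k ω, m ≤ F k ω) (N : ℕ) :
    ∑ k ∈ Finset.range N, ∫ ω, α k ω ∂P ≤ (c - m) / lam := by
  have hpath : ∀ ω, lam * ∑ k ∈ Finset.range N, α k ω ≤ c - m := fun ω => by
    have := mul_sum_range_le_of_le_sub (fun k => hdesc k ω) N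
    linarith [hF0 ω, hFm N ω]
  have hmono := integral_mono ((integrable_finsetSum _ fun k _ => hαint k).const_mul lam)
    (integrable_const (c - m)) hpath
  rw [integral_const_mul, integral_finsetSum _ fun k _ => hαint k, integral_const,
    probReal_univ, one_smul] at hmono
  rwa [le_div_iff₀ hlam, mul_comm]

theorem stmt12_general {n : ℕ} (μ : Measure ((Fin n → ℝ) × ℝ))
    (hxx : ∀ i j : Fin n, Integrable (fun p => p.1 i * p.1 j) μ)
    (hxy : ∀ i : Fin n, Integrable (fun p => p.1 i * p.2) μ)
    (hyy : Integrable (fun p => p.2 ^ 2) μ)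
    (J : (Fin n → ℝ) → ℝ)
    (hJ : ∀ w : Fin n → ℝ, J w = (1 / 2) * ∫ p, (p.2 - p.1 ⬝ᵥ w) ^ 2 ∂μ)
    (Exx : Matrix (Fin n) (Fin n) ℝ)
    (hExx : ∀ i j, Exx i j = ∫ p, p.1 i * p.1 j ∂μ)
    (Exy : Fin n → ℝ)
    (hExy : ∀ i, Exy i = ∫ p, p.1 i * p.2 ∂μ)
    (wstar : Fin n → ℝ) (hws : Exx *ᵥ wstar = Exy)
    {Ω : Type*} [MeasurableSpace Ω] (P : Measure Ω) [IsProbabilityMeasure P]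
    (lam ε : ℝ) (hlam : 0 < lam)
    (w g : ℕ → Ω → Fin n → ℝ)
    (w0 : Fin n → ℝ) (hw0 : ∀ ω, w 0 ω = w0)
    (α : ℕ → Ω → ℝ)
    (hα : ∀ k ω, α k ω =
      if J (w k ω - ε • g k ω) - J (w k ω) ≤ -lam then (1 : ℝ) else 0)
    (hαint : ∀ k, Integrable (α k) P)
    (hstep : ∀ k ω, w (k + 1) ω =
      if J (w k ω - ε • g k ω) - J (w k ω) ≤ -lam then w k ω - ε • g k ω else w k ω) :
    Filter.limsup (fun N => ∑ k ∈ Finset.range (N + 1), ∫ ω, α k ω ∂P) Filter.atTop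
      ≤ (J w0 - J wstar) / lam := by
  have hnormal : secondMoment μ *ᵥ wstar = crossMoment μ := by
    rwa [show secondMoment μ = Exx from Matrix.ext fun i j => (hExx i j).symm,
      show crossMoment μ = Exy from funext fun i => (hExy i).symm]
  have hmin : ∀ v, J wstar ≤ J v := fun v => by
    rw [hJ, hJ]
    exact mul_le_mul_of_nonneg_left
      (integral_sq_sub_dotProduct_le_of_normal_eq hxx hxy hyy hnormal v) (by norm_num)
  have hdesc : ∀ k ω, lam * α k ω ≤ J (w k ω) - J (w (k + 1) ω) := fun k ω => by
    rw [hα, hstep]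
    exact mul_ite_le_sub_ite J lam _ _
  have hαnonneg : ∀ k ω, 0 ≤ α k ω := fun k ω => by rw [hα]; positivity
  refine Filter.limsup_le_of_le
    (Filter.isCoboundedUnder_le_of_le _ fun N => Finset.sum_nonneg fun k _ =>
      integral_nonneg (hαnonneg k))
    (Filter.Eventually.of_forall fun N => ?_)
  exact sum_integral_le_of_mul_le_sub (F := fun k ω => J (w k ω)) hlam hαint hdesc
    (fun ω => by rw [hw0]) (fun k ω => hmin _) (N + 1)

theorem stmt12 {n : ℕ} (μ : Measure ((Fin n → ℝ) × ℝ)) [IsProbabilityMeasure μ]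
    (hxx : ∀ i j : Fin n, Integrable (fun p => p.1 i * p.1 j) μ)
    (hxy : ∀ i : Fin n, Integrable (fun p => p.1 i * p.2) μ)
    (hyy : Integrable (fun p => p.2 ^ 2) μ)
    (J : (Fin n → ℝ) → ℝ)
    (hJ : ∀ w : Fin n → ℝ, J w = (1 / 2) * ∫ p, (p.2 - p.1 ⬝ᵥ w) ^ 2 ∂μ)
    (Exx : Matrix (Fin n) (Fin n) ℝ)
    (hExx : ∀ i j, Exx i j = ∫ p, p.1 i * p.1 j ∂μ)
    (Exy : Fin n → ℝ)
    (hExy : ∀ i, Exy i = ∫ p, p.1 i * p.2 ∂μ)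
    (wstar : Fin n → ℝ) (hws : Exx *ᵥ wstar = Exy)
    {Ω : Type*} [MeasurableSpace Ω] (P : Measure Ω) [IsProbabilityMeasure P]
    (lam ε : ℝ) (hlam : 0 < lam) (hε : 0 < ε)
    (w g : ℕ → Ω → Fin n → ℝ)
    (w0 : Fin n → ℝ) (hw0 : ∀ ω, w 0 ω = w0)
    (α : ℕ → Ω → ℝ)
    (hα : ∀ k ω, α k ω =
      if J (w k ω - ε • g k ω) - J (w k ω) ≤ -lam then (1 : ℝ) else 0)
    (hαint : ∀ k, Integrable (α k) P)
    (hJint : ∀ k, Integrable (fun ω => J (w k ω)) P)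
    (hstep : ∀ k ω, w (k + 1) ω =
      if J (w k ω - ε • g k ω) - J (w k ω) ≤ -lam then w k ω - ε • g k ω else w k ω) :
    Filter.limsup (fun N => ∑ k ∈ Finset.range (N + 1), ∫ ω, α k ω ∂P) Filter.atTop
      ≤ (J w0 - J wstar) / lam :=
  stmt12_general μ hxx hxy hyy J hJ Exx hExx Exy hExy wstar hws P lam ε hlam w g w0 hw0 α hα hαint
    hstep
end
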